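/- Let f : I → I be a continuous map on the unit interval I = [0,1], and suppose the induced map f̄ on K(I) is such that C₁(f̄) is residual in K(I) × K(I). Then C₁(f) is dense in I × I, i.e., for every pair of nondegenerate subintervals J₁, J₂ ⊆ I, liminf_{n→∞} dist(fⁿ(J₁), fⁿ(J₂)) = 0. -/

import Mathlib

open Filter Metric TopologicalSpace

/-- The induced map on the hyperspace of nonempty compact subsets. -/
noncomputable def inducedMap {X : Type*} [MetricSpace X] (f : X → X) (hf : Continuous f) :
    NonemptyCompacts X → NonemptyCompacts X :=
  fun K => ⟨⟨f '' K, K.isCompact.image hf⟩, K.nonempty.image f⟩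

/-!
If `C₁(f̄)` is dense, any two nonempty open sets `U₁, U₂` contain compact sets `L₁ ⊆ U₁`,
`L₂ ⊆ U₂` forming a proximal pair for `f̄`; whenever `fⁿ(L₁)` and `fⁿ(L₂)` are Hausdorff-close,
some points of `U₁` and `U₂` have close `n`-th images. This gives the statement about intervals at
once, and the density of `C₁(f)` by the Baire category theorem: `C₁(f)` contains the intersection
of the open sets `{(x, y) | ∃ n ≥ N, d(fⁿx, fⁿy) < 1/(k+1)}`, each of which is therefore dense.
-/

/-- The bound `C` matters: the real `liminf` of a sequence unbounded above is the junk value `0`. -/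
theorem liminf_eq_zero_iff_frequently_lt {u : ℕ → ℝ} (h0 : ∀ n, 0 ≤ u n)
    {C : ℝ} (hC : ∀ n, u n ≤ C) :
    liminf u atTop = 0 ↔ ∀ ε > 0, ∃ᶠ n in atTop, u n < ε := by
  have hcobdd : IsCoboundedUnder (· ≥ ·) atTop u := isCoboundedUnder_ge_of_le atTop hC
  have hbdd : IsBoundedUnder (· ≥ ·) atTop u := isBoundedUnder_of ⟨0, h0⟩
  refine ⟨fun h ε hε => frequently_lt_of_liminf_lt hcobdd (h ▸ hε), fun h => ?_⟩
  refine le_antisymm (le_of_forall_pos_le_add fun ε hε => ?_)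
    (le_liminf_of_le hcobdd (.of_forall h0))
  rw [zero_add]
  exact liminf_le_of_frequently_le ((h ε hε).mono fun n hn => hn.le) hbdd

theorem liminf_dist_eq_zero_iff {Y : Type*} [PseudoMetricSpace Y] [BoundedSpace Y]
    (x y : ℕ → Y) :
    liminf (fun n => dist (x n) (y n)) atTop = 0 ↔
      ∀ ε > 0, ∃ᶠ n in atTop, dist (x n) (y n) < ε := by
  obtain ⟨C, hC⟩ := isBounded_iff.1 (Bornology.isBounded_univ.2 ‹BoundedSpace Y›)
  exact liminf_eq_zero_iff_frequently_lt (fun n => dist_nonneg) (fun n => hC trivial trivial)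

theorem Set.nonempty_interior_Icc {α : Type*} [LinearOrder α] [DenselyOrdered α]
    [TopologicalSpace α] [OrderClosedTopology α] {a b : α} (hab : a < b) :
    (interior (Set.Icc a b)).Nonempty :=
  (Set.nonempty_Ioo.2 hab).mono (interior_maximal Set.Ioo_subset_Icc_self isOpen_Ioo)

section Hyperspace

variable {X : Type*} [MetricSpace X]

theorem Metric.NonemptyCompacts.exists_dist_lt_of_dist_lt {K L : NonemptyCompacts X} {r : ℝ}
    (h : dist K L < r) {x : X} (hx : x ∈ (K : Set X)) : ∃ y ∈ (L : Set X), dist x y < r :=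
  exists_dist_lt_of_hausdorffDist_lt hx (NonemptyCompacts.dist_eq.symm.trans_lt h)
    (hausdorffEDist_ne_top_of_nonempty_of_bounded K.nonempty L.nonempty
      K.isCompact.isBounded L.isCompact.isBounded)

theorem coe_iterate_inducedMap (f : X → X) (hf : Continuous f) (n : ℕ)
    (K : NonemptyCompacts X) : ((inducedMap f hf)^[n] K : Set X) = f^[n] '' K := by
  induction n with
  | zero => simp
  | succ n ih =>
    rw [Function.iterate_succ_apply', Function.iterate_succ', Set.image_comp, ← ih]
    rfl

end Hyperspace

section Proximal

variable {X : Type*} [MetricSpace X]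

/-- `C₁(f)`. -/
def proximalPairs (f : X → X) : Set (X × X) :=
  {p | liminf (fun n => dist (f^[n] p.1) (f^[n] p.2)) atTop = 0}

def FrequentlyCloseOnOpens (f : X → X) : Prop :=
  ∀ ⦃U₁ U₂ : Set X⦄, IsOpen U₁ → IsOpen U₂ → U₁.Nonempty → U₂.Nonempty → ∀ ε > 0,
    ∃ᶠ n in atTop, ∃ x ∈ U₁, ∃ y ∈ U₂, dist (f^[n] x) (f^[n] y) < ε

theorem frequentlyCloseOnOpens_of_dense_proximalPairs_inducedMap [CompactSpace X]
    {f : X → X} (hf : Continuous f) (hdense : Dense (proximalPairs (inducedMap f hf))) :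
    FrequentlyCloseOnOpens f := by
  intro U₁ U₂ hU₁ hU₂ ⟨x₁, hx₁⟩ ⟨x₂, hx₂⟩ ε hε
  -- the Hausdorff metric on `NonemptyCompacts X` induces the Vietoris topology
  obtain ⟨⟨L₁, L₂⟩, ⟨hL₁, hL₂⟩, hL⟩ := hdense.inter_open_nonempty _
    ((NonemptyCompacts.isOpen_subsets_of_isOpen hU₁).prod
      (NonemptyCompacts.isOpen_subsets_of_isOpen hU₂))
    ⟨({x₁}, {x₂}), Set.singleton_subset_iff.2 hx₁, Set.singleton_subset_iff.2 hx₂⟩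
  refine ((liminf_dist_eq_zero_iff _ _).1 hL ε hε).mono fun n hn => ?_
  obtain ⟨x, hx⟩ := L₁.nonempty
  have hfx : f^[n] x ∈ ((inducedMap f hf)^[n] L₁ : Set X) := by
    rw [coe_iterate_inducedMap]
    exact Set.mem_image_of_mem _ hx
  obtain ⟨_, hy, hxy⟩ := NonemptyCompacts.exists_dist_lt_of_dist_lt hn hfx
  rw [coe_iterate_inducedMap] at hy
  obtain ⟨y, hy, rfl⟩ := hy
  exact ⟨x, hL₁ hx, y, hL₂ hy, hxy⟩

namespace FrequentlyCloseOnOpens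

variable {f : X → X}

theorem dense_proximalPairs [CompactSpace X] (hf : Continuous f) (h : FrequentlyCloseOnOpens f) :
    Dense (proximalPairs f) := by
  let S : ℕ × ℕ → Set (X × X) := fun kN =>
    ⋃ n ≥ kN.2, {p | dist (f^[n] p.1) (f^[n] p.2) < 1 / (kN.1 + 1)}
  have hS_open : ∀ kN, IsOpen (S kN) := fun kN => isOpen_biUnion fun n _ =>
    isOpen_lt (((hf.iterate n).comp continuous_fst).dist ((hf.iterate n).comp continuous_snd))
      continuous_const
  have hS_dense : ∀ kN, Dense (S kN) := by
    refine fun ⟨k, N⟩ => dense_iff_inter_open.2 fun W hW ⟨⟨x, y⟩, hxy⟩ => ?_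
    obtain ⟨U₁, U₂, hU₁, hU₂, hx, hy, hUW⟩ := isOpen_prod_iff.1 hW x y hxy
    obtain ⟨n, hn, x', hx', y', hy', hd⟩ :=
      frequently_atTop.1 (h hU₁ hU₂ ⟨x, hx⟩ ⟨y, hy⟩ _ Nat.one_div_pos_of_nat) N
    exact ⟨(x', y'), hUW ⟨hx', hy'⟩, Set.mem_biUnion hn hd⟩
  refine (dense_iInter_of_isOpen hS_open hS_dense).mono fun p hp => ?_
  refine (liminf_dist_eq_zero_iff _ _).2 fun ε hε => ?_
  obtain ⟨k, hk⟩ := exists_nat_one_div_lt hε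
  refine frequently_atTop.2 fun N => ?_
  obtain ⟨n, hn, hd⟩ := Set.mem_iUnion₂.1 (Set.mem_iInter.1 hp (k, N))
  exact ⟨n, hn, hd.trans hk⟩

theorem liminf_sInf_dist_image_iterate_eq_zero [BoundedSpace X] (h : FrequentlyCloseOnOpens f)
    {J₁ J₂ : Set X} (h₁ : (interior J₁).Nonempty) (h₂ : (interior J₂).Nonempty) :
    liminf (fun n => sInf (Set.image2 dist (f^[n] '' J₁) (f^[n] '' J₂))) atTop = 0 := by
  have hne : ∀ n, (Set.image2 dist (f^[n] '' J₁) (f^[n] '' J₂)).Nonempty := fun n =>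
    ((h₁.mono interior_subset).image _).image2 ((h₂.mono interior_subset).image _)
  have hnonneg : ∀ n, ∀ d ∈ Set.image2 dist (f^[n] '' J₁) (f^[n] '' J₂), 0 ≤ d := fun n =>
    Set.forall_mem_image2.2 fun _ _ _ _ => dist_nonneg
  have hbdd : ∀ n, BddBelow (Set.image2 dist (f^[n] '' J₁) (f^[n] '' J₂)) := fun n =>
    ⟨0, hnonneg n⟩
  obtain ⟨C, hC⟩ := isBounded_iff.1 (Bornology.isBounded_univ.2 ‹BoundedSpace X›)
  have hle : ∀ n, sInf (Set.image2 dist (f^[n] '' J₁) (f^[n] '' J₂)) ≤ C := by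
    intro n
    obtain ⟨_, ⟨x, hx, y, hy, rfl⟩⟩ := hne n
    exact (csInf_le (hbdd n) (Set.mem_image2_of_mem hx hy)).trans (hC trivial trivial)
  refine (liminf_eq_zero_iff_frequently_lt (fun n => Real.sInf_nonneg (hnonneg n))
    hle).2 fun ε hε => ?_
  refine (h isOpen_interior isOpen_interior h₁ h₂ ε hε).mono fun n ⟨x, hx, y, hy, hxy⟩ => ?_
  exact (csInf_lt_iff (hbdd n) (hne n)).2 ⟨_, Set.mem_image2_of_mem
    (Set.mem_image_of_mem _ (interior_subset hx)) (Set.mem_image_of_mem _ (interior_subset hy)),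
    hxy⟩

end FrequentlyCloseOnOpens

end Proximal

/-- Let `f` be a continuous self-map of `I = [0,1]` and suppose `C₁(f̄)` is residual in
`K(I) × K(I)`. Then `C₁(f)` is dense in `I × I`; equivalently, for every pair of nondegenerate
compact subintervals `J₁ = [a,b]`, `J₂ = [c,d]` of `I`,
`liminf_n dist(fⁿ(J₁), fⁿ(J₂)) = 0`. -/
theorem C1_dense_of_residual_induced
    (f : Set.Icc (0:ℝ) 1 → Set.Icc (0:ℝ) 1) (hf : Continuous f)
    (hres : {p : NonemptyCompacts (Set.Icc (0:ℝ) 1) × NonemptyCompacts (Set.Icc (0:ℝ) 1) |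
        liminf (fun n => dist ((inducedMap f hf)^[n] p.1) ((inducedMap f hf)^[n] p.2)) atTop = 0}
      ∈ residual (NonemptyCompacts (Set.Icc (0:ℝ) 1) × NonemptyCompacts (Set.Icc (0:ℝ) 1))) :
    Dense {p : Set.Icc (0:ℝ) 1 × Set.Icc (0:ℝ) 1 |
        liminf (fun n => dist (f^[n] p.1) (f^[n] p.2)) atTop = 0} ∧
    ∀ a b c d : Set.Icc (0:ℝ) 1, a < b → c < d →
      liminf (fun n => sInf (Set.image2 dist (f^[n] '' Set.Icc a b) (f^[n] '' Set.Icc c d)))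
        atTop = 0 := by
  have hclose : FrequentlyCloseOnOpens f :=
    frequentlyCloseOnOpens_of_dense_proximalPairs_inducedMap hf (dense_of_mem_residual hres)
  exact ⟨hclose.dense_proximalPairs hf, fun a b c d hab hcd =>
    hclose.liminf_sInf_dist_image_iterate_eq_zero (Set.nonempty_interior_Icc hab)
      (Set.nonempty_interior_Icc hcd)⟩
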